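/- Let A ∈ ℂ^{m×n}, let S ∈ ℂ^{m×m} and T ∈ ℂ^{n×n} be Hermitian positive definite. Let Q₁ ∈ ℂ^{m×r} satisfy Q₁*SQ₁ = I_r and Q₂ ∈ ℂ^{n×s} satisfy Q₂*TQ₂ = I_s. If ‖(I − Q₁Q₁*S)A‖₂ ≤ ε_S and ‖(I − Q₂Q₂*T)A*‖₂ ≤ ε_T for some ε_S, ε_T ≥ 0, then ‖A − Q₁Q₁*S·A·T Q₂Q₂*‖₂ ≤ ε_S + ε_T·‖Q₁Q₁*S‖₂. -/

import Mathlib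

open Matrix ComplexOrder

noncomputable section

/-- Euclidean (ℓ²) norm of a complex vector. -/
def vecNorm2 {m : Type*} [Fintype m] (x : m → ℂ) : ℝ :=
  Real.sqrt (∑ i, ‖x i‖ ^ 2)

/-- Spectral (ℓ²-operator) norm of a complex matrix. -/
def specNorm {m p : Type*} [Fintype m] [Fintype p] (M : Matrix m p ℂ) : ℝ :=
  sSup {t : ℝ | ∃ x : p → ℂ, x ≠ 0 ∧ t = vecNorm2 (M *ᵥ x) / vecNorm2 x}

/-- The B-inner product ⟨x,y⟩_B = y*Bx. -/
def Binner {m : Type*} [Fintype m] (B : Matrix m m ℂ) (x y : m → ℂ) : ℂ :=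
  star y ⬝ᵥ B *ᵥ x

/-- The B-norm of a vector, ‖x‖_B = √(x*Bx). -/
def vecBnorm {m : Type*} [Fintype m] (B : Matrix m m ℂ) (x : m → ℂ) : ℝ :=
  Real.sqrt (star x ⬝ᵥ B *ᵥ x).re

/-- The induced B-norm of a matrix, ‖M‖_B = sup_{x ≠ 0} ‖Mx‖_B / ‖x‖_B. -/
def matBnorm {m : Type*} [Fintype m] (B M : Matrix m m ℂ) : ℝ :=
  sSup {t : ℝ | ∃ x : m → ℂ, x ≠ 0 ∧ t = vecBnorm B (M *ᵥ x) / vecBnorm B x}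

/-!
Writing `P = Q₁Q₁ᴴS` and `R = Q₂Q₂ᴴT`, the Hermitian symmetry of `T` gives `Rᴴ = TQ₂Q₂ᴴ`, and
`A - PARᴴ = (1 - P)A + P((1 - R)Aᴴ)ᴴ`. The triangle inequality, submultiplicativity of the
spectral norm and its invariance under `ᴴ` bound the right-hand side by `ε_S + ‖P‖ ε_T`.
-/

open scoped Matrix.Norms.L2Operator

theorem ContinuousLinearMap.sSup_norm_apply_div_norm_eq_opNorm {𝕜 E F : Type*}
    [NontriviallyNormedField 𝕜] [NormedAddCommGroup E] [NormedSpace 𝕜 E]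
    [SeminormedAddCommGroup F] [NormedSpace 𝕜 F] (f : E →L[𝕜] F) :
    sSup {t : ℝ | ∃ x : E, x ≠ 0 ∧ t = ‖f x‖ / ‖x‖} = ‖f‖ := by
  set s := {t : ℝ | ∃ x : E, x ≠ 0 ∧ t = ‖f x‖ / ‖x‖}
  have hbound : ∀ t ∈ s, t ≤ ‖f‖ := by
    rintro t ⟨x, -, rfl⟩
    exact div_le_of_le_mul₀ (norm_nonneg x) (norm_nonneg f) (f.le_opNorm x)
  refine le_antisymm (Real.sSup_le hbound (norm_nonneg f)) ?_
  have hnonneg : 0 ≤ sSup s := Real.sSup_nonneg <| by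
    rintro t ⟨x, -, rfl⟩
    positivity
  refine f.opNorm_le_bound hnonneg fun x => ?_
  rcases eq_or_ne x 0 with rfl | hx
  · simp
  · have hx' : 0 < ‖x‖ := norm_pos_iff.mpr hx
    exact (div_le_iff₀ hx').mp (le_csSup ⟨‖f‖, hbound⟩ ⟨x, hx, rfl⟩)

lemma vecNorm2_eq_norm_toLp {p : Type*} [Fintype p] (x : p → ℂ) :
    vecNorm2 x = ‖WithLp.toLp 2 x‖ := by
  rw [EuclideanSpace.norm_eq]
  rfl

lemma specNorm_eq_l2_opNorm {m p : Type*} [Fintype m] [Fintype p] [DecidableEq p]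
    (M : Matrix m p ℂ) : specNorm M = ‖M‖ := by
  rw [l2_opNorm_def, ← ContinuousLinearMap.sSup_norm_apply_div_norm_eq_opNorm, specNorm]
  congr 1
  ext t
  constructor
  · rintro ⟨x, hx, rfl⟩
    refine ⟨WithLp.toLp 2 x, by simpa using hx, ?_⟩
    simp only [vecNorm2_eq_norm_toLp]
    rfl
  · rintro ⟨v, hv, rfl⟩
    refine ⟨v.ofLp, by simpa using hv, ?_⟩
    simp only [vecNorm2_eq_norm_toLp]
    rfl

section

variable {m n 𝕜 : Type*} [Fintype m] [Fintype n] [DecidableEq m] [DecidableEq n] [RCLike 𝕜]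

lemma sub_mul_mul_conjTranspose_eq (A : Matrix m n 𝕜) (P : Matrix m m 𝕜) (R : Matrix n n 𝕜) :
    A - P * A * Rᴴ = (1 - P) * A + P * ((1 - R) * Aᴴ)ᴴ := by
  simp only [conjTranspose_mul, conjTranspose_sub,
    conjTranspose_conjTranspose, Matrix.sub_mul, Matrix.mul_sub, Matrix.one_mul,
    Matrix.mul_assoc]
  abel

lemma l2_opNorm_sub_mul_mul_conjTranspose_le (A : Matrix m n 𝕜) (P : Matrix m m 𝕜)
    (R : Matrix n n 𝕜) :
    ‖A - P * A * Rᴴ‖ ≤ ‖(1 - P) * A‖ + ‖P‖ * ‖(1 - R) * Aᴴ‖ :=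
  calc ‖A - P * A * Rᴴ‖
      = ‖(1 - P) * A + P * ((1 - R) * Aᴴ)ᴴ‖ := by rw [sub_mul_mul_conjTranspose_eq]
    _ ≤ ‖(1 - P) * A‖ + ‖P * ((1 - R) * Aᴴ)ᴴ‖ := norm_add_le _ _
    _ ≤ ‖(1 - P) * A‖ + ‖P‖ * ‖(1 - R) * Aᴴ‖ := by
      grw [l2_opNorm_mul P, l2_opNorm_conjTranspose]

end

theorem statement17_general {m n r s : ℕ} (A : Matrix (Fin m) (Fin n) ℂ)
    (S : Matrix (Fin m) (Fin m) ℂ) (T : Matrix (Fin n) (Fin n) ℂ)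
    (hT : T.PosDef)
    (Q₁ : Matrix (Fin m) (Fin r) ℂ)
    (Q₂ : Matrix (Fin n) (Fin s) ℂ)
    (εS εT : ℝ)
    (h₁ : specNorm ((1 - Q₁ * Q₁ᴴ * S) * A) ≤ εS)
    (h₂ : specNorm ((1 - Q₂ * Q₂ᴴ * T) * Aᴴ) ≤ εT) :
    specNorm (A - Q₁ * Q₁ᴴ * S * A * T * (Q₂ * Q₂ᴴ)) ≤
      εS + εT * specNorm (Q₁ * Q₁ᴴ * S) := by
  have hR : (Q₂ * Q₂ᴴ * T)ᴴ = T * (Q₂ * Q₂ᴴ) := by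
    simp only [conjTranspose_mul, conjTranspose_conjTranspose, hT.isHermitian.eq, Matrix.mul_assoc]
  simp only [specNorm_eq_l2_opNorm] at h₁ h₂ ⊢
  calc ‖A - Q₁ * Q₁ᴴ * S * A * T * (Q₂ * Q₂ᴴ)‖
      = ‖A - Q₁ * Q₁ᴴ * S * A * (Q₂ * Q₂ᴴ * T)ᴴ‖ := by rw [hR, Matrix.mul_assoc _ T]
    _ ≤ ‖(1 - Q₁ * Q₁ᴴ * S) * A‖ + ‖Q₁ * Q₁ᴴ * S‖ * ‖(1 - Q₂ * Q₂ᴴ * T) * Aᴴ‖ :=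
      l2_opNorm_sub_mul_mul_conjTranspose_le _ _ _
    _ ≤ εS + ‖Q₁ * Q₁ᴴ * S‖ * εT := by gcongr
    _ = εS + εT * ‖Q₁ * Q₁ᴴ * S‖ := by ring

/-- randomized GSVD low-rank error bound:
    ‖A − Q₁Q₁*S·A·T·Q₂Q₂*‖₂ ≤ ε_S + ε_T·‖Q₁Q₁*S‖₂. -/
theorem statement17 {m n r s : ℕ} (A : Matrix (Fin m) (Fin n) ℂ)
    (S : Matrix (Fin m) (Fin m) ℂ) (T : Matrix (Fin n) (Fin n) ℂ)
    (hS : S.PosDef) (hT : T.PosDef)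
    (Q₁ : Matrix (Fin m) (Fin r) ℂ) (hQ₁ : Q₁ᴴ * S * Q₁ = 1)
    (Q₂ : Matrix (Fin n) (Fin s) ℂ) (hQ₂ : Q₂ᴴ * T * Q₂ = 1)
    (εS εT : ℝ) (hεS : 0 ≤ εS) (hεT : 0 ≤ εT)
    (h₁ : specNorm ((1 - Q₁ * Q₁ᴴ * S) * A) ≤ εS)
    (h₂ : specNorm ((1 - Q₂ * Q₂ᴴ * T) * Aᴴ) ≤ εT) :
    specNorm (A - Q₁ * Q₁ᴴ * S * A * T * (Q₂ * Q₂ᴴ)) ≤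
      εS + εT * specNorm (Q₁ * Q₁ᴴ * S) :=
  statement17_general A S T hT Q₁ Q₂ εS εT h₁ h₂
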